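/- For every w ∈ F_n with exponent sum σ, the equalities φ([φ⁻¹(w)]_F) = w · y^{ε_x σ d} and φ⁻¹([φ(w)]_F) = w · y^{−ε_y σ d} hold in G. -/

import Mathlib

open Fin.CommRing in
/-- The shift automorphism `Φ_s` of the free group `F_n`, sending `x_i` to `x_{[i-s]}`
(indices read modulo `n`). -/
def Phi (n : ℕ) [NeZero n] (s : ℤ) : FreeGroup (Fin n) ≃* FreeGroup (Fin n) :=
  FreeGroup.freeGroupCongr (Equiv.subRight ((s : Fin n)))

/-- The action of `ℤ` on `F_n` by shifting: `t` acts as `Φ_t`. -/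
def shiftAction (n : ℕ) [NeZero n] : Multiplicative ℤ →* MulAut (FreeGroup (Fin n)) :=
  zpowersHom (MulAut (FreeGroup (Fin n))) (Phi n 1)

/-- The group `G = F_n ⋊ ℤ`, in which `y⁻¹ xᵢ y = x_{[i+1]}`.  Every element is uniquely
`g₁ yᵗ` with `g₁ ∈ F_n` (the free component, `SemidirectProduct.left`) and `t ∈ ℤ`. -/
abbrev GSD (n : ℕ) [NeZero n] :=
  SemidirectProduct (FreeGroup (Fin n)) (Multiplicative ℤ) (shiftAction n)

/-- The embedding of the free component `F_n` into `G`. -/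
def fg (n : ℕ) [NeZero n] (w : FreeGroup (Fin n)) : GSD n := SemidirectProduct.inl w

/-- The generator `x_i` of `G`. -/
def xg (n : ℕ) [NeZero n] (i : Fin n) : GSD n := fg n (FreeGroup.of i)

/-- The generator `y` of `G`. -/
def yg (n : ℕ) [NeZero n] : GSD n := SemidirectProduct.inr (Multiplicative.ofAdd 1)

/-- The exponent sum of an element of the free group: image under the homomorphism
sending every generator to `1 ∈ ℤ`. -/
def expSum (n : ℕ) (w : FreeGroup (Fin n)) : ℤ :=
  Multiplicative.toAdd (FreeGroup.lift (fun _ => Multiplicative.ofAdd (1 : ℤ)) w)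

/-!
Every homomorphism from `G` to an abelian group takes the same value on all `xᵢ`, since
`y⁻¹ xᵢ y = x_{[i+1]}`; hence it sends `w ∈ F_n` to its value on `x₀` raised to the
exponent sum `σ` of `w`. Applied to the `y`-exponent of `α(·)` for `α = φ, φ⁻¹`, this
shows `[α(w)]_F = α(w) y^{-cσ}` with `c` the `y`-exponent of `α(x₀)`, so
`α⁻¹([α(w)]_F) = w α⁻¹(y)^{-cσ}`. For `α = φ` we have `c = d` and `φ⁻¹(y) = y^{ε_y}`;
for `α = φ⁻¹`, `c = -ε_x ε_y d`.
-/

lemma MulEquiv.symm_apply_eq_zpow_self {G : Type*} [Group G] (φ : G ≃* G) {g : G} {ε : ℤ}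
    (hε : ε * ε = 1) (h : φ g = g ^ ε) : φ.symm g = g ^ ε := by
  rw [φ.symm_apply_eq, map_zpow, h, ← zpow_mul, hε, zpow_one]

section

variable {n : ℕ} [NeZero n]

lemma yg_zpow (t : ℤ) : yg n ^ t = SemidirectProduct.inr (Multiplicative.ofAdd t) := by
  rw [yg, ← map_zpow, ← ofAdd_zsmul, smul_eq_mul, mul_one]

lemma right_yg_zpow (t : ℤ) : Multiplicative.toAdd (yg n ^ t).right = t := by
  rw [yg_zpow, SemidirectProduct.right_inr, toAdd_ofAdd]

lemma right_zpow (g : GSD n) (k : ℤ) : (g ^ k).right = g.right ^ k :=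
  map_zpow SemidirectProduct.rightHom g k

lemma right_xg (i : Fin n) : (xg n i).right = 1 := rfl

lemma fg_left (g : GSD n) : fg n g.left = g * yg n ^ (-Multiplicative.toAdd g.right) := by
  rw [yg_zpow, ofAdd_neg, map_inv, fg, eq_mul_inv_iff_mul_eq, ofAdd_toAdd]
  exact SemidirectProduct.inl_left_mul_inr_right g

lemma map_fg_left {F H : Type*} [Group H] [FunLike F (GSD n) H] [MonoidHomClass F (GSD n) H]
    (f : F) (g : GSD n) :
    f (fg n g.left) = f g * f (yg n) ^ (-Multiplicative.toAdd g.right) := by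
  rw [fg_left, map_mul, map_zpow]

lemma yg_inv_mul_xg_mul_yg (i : Fin n) : (yg n)⁻¹ * xg n i * yg n = xg n (i + 1) := by
  have hy : yg n = (SemidirectProduct.inr (Multiplicative.ofAdd (-1 : ℤ)))⁻¹ := by
    rw [← map_inv]; rfl
  have hshift : shiftAction n (Multiplicative.ofAdd (-1 : ℤ)) (FreeGroup.of i)
      = FreeGroup.of (i + 1) := by
    simp [shiftAction, Phi, FreeGroup.freeGroupCongr_symm]
  rw [hy, inv_inv, xg, xg, fg, fg, ← hshift, SemidirectProduct.inl_aut, map_inv]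

open Fin.CommRing in
lemma map_xg_eq_map_xg_zero {H : Type*} [CommGroup H] (f : GSD n →* H) (i : Fin n) :
    f (xg n i) = f (xg n 0) := by
  have hstep (j : Fin n) : f (xg n (j + 1)) = f (xg n j) := by
    rw [← yg_inv_mul_xg_mul_yg, map_mul, map_mul, map_inv, inv_mul_cancel_comm]
  have hcast (k : ℕ) : f (xg n (k : Fin n)) = f (xg n 0) := by
    induction k with
    | zero => rw [Nat.cast_zero]
    | succ k ih => rw [Nat.cast_succ, hstep, ih]
  simpa using hcast i.val

lemma map_fg_eq_zpow_expSum {H : Type*} [CommGroup H] (f : GSD n →* H) (w : FreeGroup (Fin n)) :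
    f (fg n w) = f (xg n 0) ^ expSum n w := by
  have hcomp : f.comp SemidirectProduct.inl = (zpowersHom H (f (xg n 0))).comp
      (FreeGroup.lift fun _ => Multiplicative.ofAdd (1 : ℤ)) :=
    FreeGroup.ext_hom _ _ fun i => by simpa [xg, fg] using map_xg_eq_map_xg_zero f i
  exact DFunLike.congr_fun hcomp w

lemma toAdd_right_map_fg (f : GSD n →* GSD n) (w : FreeGroup (Fin n)) :
    Multiplicative.toAdd (f (fg n w)).right
      = Multiplicative.toAdd (f (xg n 0)).right * expSum n w := by
  rw [mul_comm, ← smul_eq_mul, ← toAdd_zpow]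
  exact congrArg Multiplicative.toAdd
    (map_fg_eq_zpow_expSum (SemidirectProduct.rightHom.comp f) w)

lemma symm_fg_left_apply_fg (α : GSD n ≃* GSD n) (w : FreeGroup (Fin n)) :
    α.symm (fg n (α (fg n w)).left)
      = fg n w * α.symm (yg n) ^ (-(Multiplicative.toAdd (α (xg n 0)).right * expSum n w)) := by
  rw [map_fg_left, MulEquiv.symm_apply_apply]
  congr 3
  exact toAdd_right_map_fg α.toMonoidHom w

end

theorem statement_9_general (n : ℕ) [NeZero n] (εx εy d : ℤ)
    (hεx : εx = 1 ∨ εx = -1) (hεy : εy = 1 ∨ εy = -1)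
    (φ : GSD n ≃* GSD n) (hφx : φ (xg n 0) = xg n 0 ^ εx * yg n ^ d)
    (hφy : φ (yg n) = yg n ^ εy) (w : FreeGroup (Fin n)) :
    φ (fg n ((φ.symm (fg n w)).left)) = fg n w * yg n ^ (εx * expSum n w * d) ∧
    φ.symm (fg n ((φ (fg n w)).left)) = fg n w * yg n ^ (-(εy * expSum n w * d)) := by
  have hεx2 : εx * εx = 1 := by rcases hεx with rfl | rfl <;> norm_num
  have hεy2 : εy * εy = 1 := by rcases hεy with rfl | rfl <;> norm_num
  have hφy_symm : φ.symm (yg n) = yg n ^ εy := φ.symm_apply_eq_zpow_self hεy2 hφy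
  have hφx_right : Multiplicative.toAdd (φ (xg n 0)).right = d := by
    rw [hφx, SemidirectProduct.mul_right, right_zpow, right_xg, one_zpow, one_mul,
      right_yg_zpow]
  -- Comparing `y`-exponents in `hx₀` gives `0 = εx c + εy d`, `c` being that of `φ⁻¹ x₀`.
  have hφx_symm_right : Multiplicative.toAdd (φ.symm (xg n 0)).right = -(εx * εy * d) := by
    have hx₀ : xg n 0 = φ.symm (xg n 0) ^ εx * yg n ^ (εy * d) := by
      conv_lhs => rw [← φ.symm_apply_apply (xg n 0), hφx]
      rw [map_mul, map_zpow, map_zpow, hφy_symm, ← zpow_mul]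
    have h := congrArg (fun g => Multiplicative.toAdd g.right) hx₀
    rw [SemidirectProduct.mul_right, toAdd_mul, right_yg_zpow, right_zpow, toAdd_zpow, right_xg,
      toAdd_one, smul_eq_mul] at h
    linear_combination -εx * h - Multiplicative.toAdd (φ.symm (xg n 0)).right * hεx2
  constructor
  · have h := symm_fg_left_apply_fg φ.symm w
    rw [φ.symm_symm, hφy, hφx_symm_right, ← zpow_mul] at h
    rw [h]
    congr 2
    linear_combination (εx * expSum n w * d) * hεy2
  · rw [symm_fg_left_apply_fg, hφy_symm, hφx_right, ← zpow_mul]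
    congr 2
    ring

/-- For every `w ∈ F_n` with exponent sum `σ`:
`φ([φ⁻¹(w)]_F) = w ⬝ y^{ε_x σ d}` and `φ⁻¹([φ(w)]_F) = w ⬝ y^{-ε_y σ d}` in `G`. -/
theorem statement_9 (n : ℕ) (hn : 2 ≤ n) [NeZero n] (εx εy d : ℤ)
    (hεx : εx = 1 ∨ εx = -1) (hεy : εy = 1 ∨ εy = -1)
    (φ : GSD n ≃* GSD n) (hφx : φ (xg n 0) = xg n 0 ^ εx * yg n ^ d)
    (hφy : φ (yg n) = yg n ^ εy) (w : FreeGroup (Fin n)) :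
    φ (fg n ((φ.symm (fg n w)).left)) = fg n w * yg n ^ (εx * expSum n w * d) ∧
    φ.symm (fg n ((φ (fg n w)).left)) = fg n w * yg n ^ (-(εy * expSum n w * d)) :=
  statement_9_general n εx εy d hεx hεy φ hφx hφy w
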